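/- arXiv:1901.01412 — 5 statements merged into one kernel-verified Lean document; each statement's English description precedes it below -/
import Mathlib

section
/- Let T be a cut-equivalent (Gomory-Hu) tree of a finite undirected graph G with edge capacities c_G. Then the sum over all edges uv of G of c_G(u,v) times the hop-distance between u and v in T equals the sum of the capacities of the edges of T. -/
/-!
Expanding each tree capacity `c_T(u, v)` as the capacity of the cut it induces, the right-hand
side counts every graph edge `ab` once for each tree dart `(u, v)` separating `a` from `b`.
In a tree these are the darts of the path from `a` to `b`, so there are `dist_T(a, b)` of them:
walking along that path from `c` to the next vertex `b` adds exactly the dart `(c, b)`, because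
an edge of a tree other than `bc` never separates `b` from `c`.
-/

open Finset

namespace SimpleGraph

variable {V : Type*} {G : SimpleGraph V}

lemma Walk.dist_start_le_length_of_mem_support [DecidableEq V] {u v w : V} (p : G.Walk u v)
    (hw : w ∈ p.support) : G.dist u w ≤ p.length :=
  (dist_le _).trans (p.length_takeUntil_le_length hw)

lemma Walk.dist_end_le_length_of_mem_support [DecidableEq V] {u v w : V} (p : G.Walk u v)
    (hw : w ∈ p.support) : G.dist w v ≤ p.length :=
  (dist_le _).trans (p.length_dropUntil_le_length hw)

/-- The only edge of a tree leading from the `u`-side of the edge `uv` to its `v`-side is `uv`. -/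
lemma IsTree.eq_and_eq_of_adj_of_dist_lt (hG : G.IsTree) {u v x y : V} (huv : G.Adj u v)
    (hxy : G.Adj x y) (hx : G.dist x u < G.dist x v) (hy : G.dist y v < G.dist y u) :
    x = u ∧ y = v := by
  classical
  have hc := hG.connected
  have hxv : G.dist x v = G.dist x u + 1 := by
    have := hG.dist_eq_dist_add_one_of_adj x huv; omega
  have hyu : G.dist y u = G.dist y v + 1 := by
    have := hG.dist_eq_dist_add_one_of_adj y huv; omega
  have hxyv : G.dist x v ≤ G.dist x y + G.dist y v := hc.dist_triangle
  have hyxu : G.dist y u ≤ G.dist y x + G.dist x u := hc.dist_triangle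
  rw [dist_eq_one_iff_adj.mpr hxy] at hxyv
  rw [dist_eq_one_iff_adj.mpr hxy.symm] at hyxu
  by_cases hxu : x = u
  · subst hxu
    rw [dist_self] at hyxu
    exact ⟨rfl, hc.dist_eq_zero_iff.mp (by omega)⟩
  exfalso
  obtain ⟨p, hp, hpl⟩ := hc.exists_path_of_dist x u
  obtain ⟨r, hr, hrl⟩ := hc.exists_path_of_dist y v
  have hvp : v ∉ p.support := fun hv => by
    have := p.dist_start_le_length_of_mem_support hv; omega
  have hxr : x ∉ r.support := fun hx => by
    have := r.dist_end_le_length_of_mem_support hx; omega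
  -- by uniqueness of paths, `x → y ⇝ v` is `x ⇝ u → v`
  have hu : u ∈ (Walk.cons hxy r).support :=
    hG.isAcyclic.mem_support_of_ne_mem_support_of_adj_of_isPath (hr.cons hxr) hp huv.symm hvp
  rcases List.mem_cons.mp (Walk.support_cons hxy r ▸ hu) with hux | hur
  · exact hxu hux.symm
  · have := r.dist_start_le_length_of_mem_support hur; omega

lemma IsTree.dist_lt_iff_dist_lt_of_adj (hG : G.IsTree) {u v x y : V} (huv : G.Adj u v)
    (hxy : G.Adj x y) (h₁ : ¬(x = u ∧ y = v)) (h₂ : ¬(x = v ∧ y = u)) :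
    G.dist x u < G.dist x v ↔ G.dist y u < G.dist y v := by
  have hx := hG.dist_ne_of_adj x huv
  have hy := hG.dist_ne_of_adj y huv
  constructor
  · intro hxu
    by_contra hyv
    exact h₁ (hG.eq_and_eq_of_adj_of_dist_lt huv hxy hxu (by omega))
  · intro hyu
    by_contra hxv
    exact h₂ (hG.eq_and_eq_of_adj_of_dist_lt huv hxy.symm hyu (by omega)).symm

variable [Fintype V] [DecidableRel G.Adj]

noncomputable def separatingDarts (G : SimpleGraph V) [DecidableRel G.Adj] (a b : V) :
    Finset (V × V) :=
  {e | G.Adj e.1 e.2 ∧ G.dist a e.1 < G.dist a e.2 ∧ G.dist b e.2 < G.dist b e.1}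

@[simp]
lemma mem_separatingDarts {a b u v : V} :
    (u, v) ∈ G.separatingDarts a b ↔
      G.Adj u v ∧ G.dist a u < G.dist a v ∧ G.dist b v < G.dist b u := by
  simp [separatingDarts]

lemma IsTree.separatingDarts_eq_insert [DecidableEq V] (hG : G.IsTree) {a b c : V}
    (hbc : G.Adj b c) (hcb : G.dist a c < G.dist a b) :
    G.separatingDarts a b = insert (c, b) (G.separatingDarts a c) := by
  ext ⟨u, v⟩
  simp only [mem_insert, Prod.mk.injEq, mem_separatingDarts]
  by_cases h₁ : u = c ∧ v = b
  · obtain ⟨rfl, rfl⟩ := h₁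
    simp [hbc.symm, hcb, dist_eq_one_iff_adj.mpr hbc]
  by_cases h₂ : u = b ∧ v = c
  · obtain ⟨rfl, rfl⟩ := h₂
    grind
  by_cases huv : G.Adj u v
  · have := hG.dist_lt_iff_dist_lt_of_adj huv.symm hbc (by tauto) (by tauto)
    tauto
  · tauto

lemma IsTree.card_separatingDarts (hG : G.IsTree) (a b : V) :
    #(G.separatingDarts a b) = G.dist a b := by
  classical
  obtain ⟨p, hp⟩ := hG.connected.exists_walk_length_eq_dist b a
  rw [dist_comm, ← hp]
  induction p with
  | nil => exact card_eq_zero.mpr (filter_eq_empty_iff.mpr fun _ _ h => by omega)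
  | @cons b c a hbc q ih =>
    have hq : q.length = G.dist c a := by
      have : G.dist b a ≤ G.dist b c + G.dist c a := hG.connected.dist_triangle
      rw [dist_eq_one_iff_adj.mpr hbc] at this
      have := dist_le q
      simp only [Walk.length_cons] at hp
      omega
    have hcb : G.dist a c < G.dist a b := by
      rw [dist_comm, ← hq, dist_comm, ← hp, Walk.length_cons]; omega
    rw [hG.separatingDarts_eq_insert hbc hcb, card_insert_of_notMem (by simp), ih hq,
      Walk.length_cons]

end SimpleGraph

open SimpleGraph

theorem stmt_1_general {V : Type*} [Fintype V] (G T : SimpleGraph V)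
    [DecidableRel G.Adj] [DecidableRel T.Adj] (hT : T.IsTree)
    (cG cT : V → V → ℝ)
    (hcut : ∀ u v, T.Adj u v → cT u v =
      ∑ a, ∑ b, if G.Adj a b ∧ T.dist a u < T.dist a v ∧ ¬ (T.dist b u < T.dist b v)
        then cG a b else 0) :
    (∑ a, ∑ b, if G.Adj a b then cG a b * (T.dist a b : ℝ) else 0)
      = ∑ u, ∑ v, if T.Adj u v then cT u v else 0 := by
  classical
  let w (e : V × V) (a b : V) : ℝ :=
    if G.Adj a b ∧ e ∈ T.separatingDarts a b then cG a b else 0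
  have hcT (e : V × V) : (if T.Adj e.1 e.2 then cT e.1 e.2 else 0) = ∑ a, ∑ b, w e a b := by
    obtain ⟨u, v⟩ := e
    by_cases huv : T.Adj u v
    · rw [if_pos huv, hcut u v huv]
      refine sum_congr rfl fun a _ => sum_congr rfl fun b _ => if_congr ?_ rfl rfl
      have hb : ¬T.dist b u < T.dist b v ↔ T.dist b v < T.dist b u := by
        have := hT.dist_ne_of_adj b huv; omega
      rw [hb, mem_separatingDarts, and_iff_right huv]
    · simp [w, huv]
  have hcard (a b : V) : ∑ e, w e a b = if G.Adj a b then cG a b * (T.dist a b : ℝ) else 0 := by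
    rw [← hT.card_separatingDarts a b]
    split_ifs with hab <;> simp [w, hab, sum_ite_mem, mul_comm]
  symm
  calc (∑ u, ∑ v, if T.Adj u v then cT u v else 0)
      = ∑ e : V × V, ∑ a, ∑ b, w e a b := by
        rw [← Fintype.sum_prod_type']; exact sum_congr rfl fun e _ => hcT e
    _ = ∑ a, ∑ b, ∑ e, w e a b := by
        rw [sum_comm]; exact sum_congr rfl fun a _ => sum_comm
    _ = _ := sum_congr rfl fun a _ => sum_congr rfl fun b _ => hcard a b

/-- For a cut-equivalent (Gomory–Hu) tree `T` of a graph `G` with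
edge capacities `cG`, the sum over graph edges of `cG(u,v) · dist_T(u,v)` equals the
sum of the capacities of the tree edges.  Sums are over ordered pairs (each edge is
counted twice on both sides).  The cut-equivalence hypothesis says the capacity of a
tree edge `(u,v)` equals the capacity in `G` of the bipartition obtained by removing
that edge from `T` (a vertex `w` lies on the `u`-side iff `dist_T(w,u) < dist_T(w,v)`). -/
theorem stmt_1 {V : Type*} [Fintype V] [DecidableEq V] (G T : SimpleGraph V)
    [DecidableRel G.Adj] [DecidableRel T.Adj] (hT : T.IsTree)
    (cG cT : V → V → ℝ)
    (hsG : ∀ u v, cG u v = cG v u) (hsT : ∀ u v, cT u v = cT v u)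
    (hcut : ∀ u v, T.Adj u v → cT u v =
      ∑ a, ∑ b, if G.Adj a b ∧ T.dist a u < T.dist a v ∧ ¬ (T.dist b u < T.dist b v)
        then cG a b else 0) :
    (∑ a, ∑ b, if G.Adj a b then cG a b * (T.dist a b : ℝ) else 0)
      = ∑ u, ∑ v, if T.Adj u v then cT u v else 0 :=
  stmt_1_general G T hT cG cT hcut
end

section
/- Let T be a cut-equivalent tree of a finite undirected graph G with edge capacities c_G. Then the weighted sum over all graph edges uv of c_G(u,v)·dist_T(u,v) is at most twice the total edge capacity of G, where dist_T denotes hop-distance in T. -/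
section CutHelpers
open Finset SimpleGraph
namespace CutTreeAux

variable {V : Type*} [DecidableEq V] {T : SimpleGraph V}

lemma dist_add_of_mem_support (hc : T.Connected) {x y z : V} (p : T.Walk x y)
    (hp : p.length = T.dist x y) (hz : z ∈ p.support) :
    T.dist x z + T.dist z y = T.dist x y := by
  have h1 : T.dist x z ≤ (p.takeUntil z hz).length := SimpleGraph.dist_le _
  have h2 : T.dist z y ≤ (p.dropUntil z hz).length := SimpleGraph.dist_le _
  have h3 : (p.takeUntil z hz).length + (p.dropUntil z hz).length = p.length := by
    rw [← SimpleGraph.Walk.length_append, p.take_spec hz]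
  have h4 := hc.dist_triangle (u := x) (v := z) (w := y)
  omega

lemma dist_lt_of_mem_support (hc : T.Connected) {x y z : V} (p : T.Walk x y)
    (hp : p.length = T.dist x y) (hz : z ∈ p.support) (hne : z ≠ y) :
    T.dist x z < T.dist x y := by
  have h := dist_add_of_mem_support hc p hp hz
  have h2 : T.dist z y ≠ 0 := by
    rw [ne_eq, hc.dist_eq_zero_iff]; exact hne
  omega

lemma dist_adj_ne (hT : T.IsTree) {u v : V} (h : T.Adj u v) (x : V) :
    T.dist x u ≠ T.dist x v := by
  intro heq
  have hc := hT.isConnected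
  obtain ⟨p, hp, hpl⟩ := (hc x u).exists_path_of_dist
  obtain ⟨q, hq, hql⟩ := (hc x v).exists_path_of_dist
  have hv : v ∉ p.support := by
    intro hv
    have := dist_lt_of_mem_support hc p hpl hv h.ne'
    omega
  have hW : (p.concat h).IsPath := by
    rw [← SimpleGraph.Walk.isPath_reverse_iff, SimpleGraph.Walk.reverse_concat]
    exact (hp.reverse).cons (by simpa [SimpleGraph.Walk.support_reverse] using hv)
  have := (hT.existsUnique_path x v).unique hW hq
  have hlen : (p.concat h).length = q.length := by rw [this]
  rw [SimpleGraph.Walk.length_concat] at hlen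
  omega

lemma dist_adj_succ (hc : T.Connected) {u v : V} (h : T.Adj u v) {x : V}
    (hlt : T.dist x u < T.dist x v) : T.dist x v = T.dist x u + 1 := by
  have h1 : T.dist u v = 1 := SimpleGraph.dist_eq_one_iff_adj.mpr h
  have h2 := hc.dist_triangle (u := x) (v := u) (w := v)
  have h3 : T.dist u v = T.dist v u := SimpleGraph.dist_comm
  omega


lemma twist (hT : T.IsTree) {u v c b : V} (huv : T.Adj u v) (hcb : T.Adj c b)
    (h1 : T.dist c u < T.dist c v) (h2 : T.dist b v < T.dist b u) :
    (u = c ∧ v = b) ∨ (u = b ∧ v = c) := by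
  have hc := hT.isConnected
  have hcv : T.dist c v = T.dist c u + 1 := dist_adj_succ hc huv h1
  have hbu : T.dist b u = T.dist b v + 1 := dist_adj_succ hc huv.symm h2
  have hbc : T.dist b c = 1 := SimpleGraph.dist_eq_one_iff_adj.mpr hcb.symm
  have hcb1 : T.dist c b = 1 := SimpleGraph.dist_eq_one_iff_adj.mpr hcb
  have t1 := hc.dist_triangle (u := b) (v := c) (w := u)
  have t2 := hc.dist_triangle (u := c) (v := b) (w := v)
  have hst : T.dist b v = T.dist c u := by omega
  obtain ⟨P1, hP1, hP1l⟩ := (hc c u).exists_path_of_dist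
  obtain ⟨P2, hP2, hP2l⟩ := (hc b v).exists_path_of_dist
  have hvP1 : v ∉ P1.support := by
    intro hmem
    have := dist_lt_of_mem_support hc P1 hP1l hmem huv.ne'
    omega
  have hW1 : (P1.concat huv).IsPath := by
    rw [← SimpleGraph.Walk.isPath_reverse_iff, SimpleGraph.Walk.reverse_concat]
    exact (hP1.reverse).cons (by simpa [SimpleGraph.Walk.support_reverse] using hvP1)
  have hcP2 : c ∉ P2.support := by
    intro hmem
    have := dist_add_of_mem_support hc P2 hP2l hmem
    omega
  have hW2 : (SimpleGraph.Walk.cons hcb P2).IsPath := hP2.cons hcP2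
  have hWeq : P1.concat huv = SimpleGraph.Walk.cons hcb P2 :=
    (hT.existsUnique_path c v).unique hW1 hW2
  have he : s(u, v) ∈ (P1.concat huv).edges := by
    rw [SimpleGraph.Walk.edges_concat]
    simp
  rw [hWeq, SimpleGraph.Walk.edges_cons] at he
  rcases List.mem_cons.mp he with heq | hmem
  · rw [Sym2.eq_iff] at heq
    tauto
  · exfalso
    have hu : u ∈ P2.support := P2.fst_mem_support_of_mem_edges hmem
    have := dist_add_of_mem_support hc P2 hP2l hu
    have huv1 : T.dist u v = 1 := SimpleGraph.dist_eq_one_iff_adj.mpr huv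
    omega

lemma parent_unique (hT : T.IsTree) {r u1 u2 v : V} (h1 : T.Adj u1 v) (h2 : T.Adj u2 v)
    (hd1 : T.dist r u1 < T.dist r v) (hd2 : T.dist r u2 < T.dist r v) : u1 = u2 := by
  have hc := hT.isConnected
  obtain ⟨P1, hP1, hP1l⟩ := (hc r u1).exists_path_of_dist
  obtain ⟨P2, hP2, hP2l⟩ := (hc r u2).exists_path_of_dist
  have hv1 : v ∉ P1.support := by
    intro hmem
    have := dist_lt_of_mem_support hc P1 hP1l hmem h1.ne'
    omega
  have hv2 : v ∉ P2.support := by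
    intro hmem
    have := dist_lt_of_mem_support hc P2 hP2l hmem h2.ne'
    omega
  have hW1 : (P1.concat h1).IsPath := by
    rw [← SimpleGraph.Walk.isPath_reverse_iff, SimpleGraph.Walk.reverse_concat]
    exact (hP1.reverse).cons (by simpa [SimpleGraph.Walk.support_reverse] using hv1)
  have hW2 : (P2.concat h2).IsPath := by
    rw [← SimpleGraph.Walk.isPath_reverse_iff, SimpleGraph.Walk.reverse_concat]
    exact (hP2.reverse).cons (by simpa [SimpleGraph.Walk.support_reverse] using hv2)
  have hWeq : P1.concat h1 = P2.concat h2 := (hT.existsUnique_path r v).unique hW1 hW2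
  have he : s(u1, v) ∈ (P1.concat h1).edges := by
    rw [SimpleGraph.Walk.edges_concat]; simp
  rw [hWeq, SimpleGraph.Walk.edges_concat, List.concat_eq_append] at he
  rcases List.mem_append.mp he with hmem | heq
  · exact absurd (P2.snd_mem_support_of_mem_edges hmem) hv2
  · have : s(u1, v) = s(u2, v) := by simpa using heq
    exact Sym2.congr_left.mp this


lemma count_eq [Fintype V] [DecidableRel T.Adj] (hT : T.IsTree) (a b : V) :
    (Finset.univ.filter fun p : V × V =>
      T.Adj p.1 p.2 ∧ T.dist a p.1 < T.dist a p.2 ∧ ¬ (T.dist b p.1 < T.dist b p.2)).card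
    = T.dist a b := by
  have hc := hT.isConnected
  suffices h : ∀ n (b : V), T.dist a b = n →
      (Finset.univ.filter fun p : V × V =>
        T.Adj p.1 p.2 ∧ T.dist a p.1 < T.dist a p.2 ∧
          ¬ (T.dist b p.1 < T.dist b p.2)).card = n by
    exact h _ b rfl
  intro n
  induction n with
  | zero =>
    intro b hb
    have hab : a = b := hc.dist_eq_zero_iff.mp hb
    subst hab
    rw [Finset.card_eq_zero, Finset.filter_eq_empty_iff]
    intro p _
    rintro ⟨_, h1, h2⟩
    exact h2 h1
  | succ n ih =>
    intro b hb
    have hab : b ≠ a := by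
      intro h; subst h; rw [SimpleGraph.dist_self] at hb; omega
    obtain ⟨p, hp, hpl⟩ := (hc a b).exists_path_of_dist
    obtain ⟨c, hbc, q, hq⟩ := SimpleGraph.Walk.exists_eq_cons_of_ne hab p.reverse
    have hcsup : c ∈ p.support := by
      have : c ∈ p.reverse.support := by rw [hq]; simp
      simpa [SimpleGraph.Walk.support_reverse] using this
    have hcb1 : T.dist c b = 1 := SimpleGraph.dist_eq_one_iff_adj.mpr hbc.symm
    have hsplit := dist_add_of_mem_support hc p hpl hcsup
    have hac : T.dist a c = n := by omega
    have hset : (Finset.univ.filter (fun p : V × V =>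
          T.Adj p.1 p.2 ∧ T.dist a p.1 < T.dist a p.2 ∧ ¬ (T.dist b p.1 < T.dist b p.2)))
        = insert ((c, b) : V × V) (Finset.univ.filter (fun p : V × V =>
          T.Adj p.1 p.2 ∧ T.dist a p.1 < T.dist a p.2 ∧
            ¬ (T.dist c p.1 < T.dist c p.2))) := by
      ext ⟨u, v⟩
      simp only [Finset.mem_filter, Finset.mem_univ, true_and, Finset.mem_insert, Prod.mk.injEq]
      constructor
      · rintro ⟨huv, hau, hbuv⟩
        by_cases hx : u = c ∧ v = b
        · exact Or.inl hx
        · refine Or.inr ⟨huv, hau, ?_⟩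
          intro hcuv
          have hbvu : T.dist b v < T.dist b u :=
            lt_of_le_of_ne (not_lt.mp hbuv) (dist_adj_ne hT huv b).symm
          rcases twist hT huv hbc.symm hcuv hbvu with ⟨h1, h2⟩ | ⟨h1, h2⟩
          · exact hx ⟨h1, h2⟩
          · subst h1; subst h2; omega
      · rintro (⟨h1, h2⟩ | ⟨huv, hau, hcuv⟩)
        · subst h1; subst h2
          refine ⟨hbc.symm, by omega, by simp [SimpleGraph.dist_self]⟩
        · refine ⟨huv, hau, ?_⟩
          intro hbuvlt
          have hcvu : T.dist c v < T.dist c u :=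
            lt_of_le_of_ne (not_lt.mp hcuv) (dist_adj_ne hT huv c).symm
          rcases twist hT huv hbc hbuvlt hcvu with ⟨h1, h2⟩ | ⟨h1, h2⟩
          · subst h1; subst h2; omega
          · subst h1; subst h2
            rw [SimpleGraph.dist_self] at hcuv
            omega
    rw [hset, Finset.card_insert_of_notMem, ih c hac]
    simp only [Finset.mem_filter, Finset.mem_univ, true_and, not_and, not_not]
    intro _ _
    rw [SimpleGraph.dist_self]
    omega

end CutTreeAux
end CutHelpers


open Finset in
/-- If `T` is a cut-equivalent tree of `G` (each tree edge capacity is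
the value of the cut in `G` induced by removing that tree edge, and this value is the
minimum cut value between the edge's endpoints), then
`∑_{uv ∈ E(G)} cG(u,v)·dist_T(u,v) ≤ 2 ∑_{uv ∈ E(G)} cG(u,v)`.
Sums are over ordered pairs (each graph edge counted twice on both sides). -/
theorem stmt_4 {V : Type*} [Fintype V] [DecidableEq V] (G T : SimpleGraph V)
    [DecidableRel G.Adj] (hT : T.IsTree)
    (cG cT : V → V → ℝ) (hnn : ∀ a b, 0 ≤ cG a b) (hsG : ∀ u v, cG u v = cG v u)
    (hcut : ∀ u v, T.Adj u v → cT u v =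
      ∑ a, ∑ b, if G.Adj a b ∧ T.dist a u < T.dist a v ∧ ¬ (T.dist b u < T.dist b v)
        then cG a b else 0)
    (hmin : ∀ u v, T.Adj u v → IsLeast
      {x : ℝ | ∃ A : Finset V, u ∈ A ∧ v ∉ A ∧
        x = ∑ a ∈ A, ∑ b ∈ Aᶜ, if G.Adj a b then cG a b else 0} (cT u v)) :
    (∑ a, ∑ b, if G.Adj a b then cG a b * (T.dist a b : ℝ) else 0)
      ≤ 2 * ∑ a, ∑ b, if G.Adj a b then cG a b else 0 := by
  classical
  have hc : T.Connected := hT.isConnected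
  haveI : Nonempty V := hc.nonempty
  haveI hdec : DecidableRel T.Adj := Classical.decRel _
  set r : V := Classical.arbitrary V with hr
  have hDnn : ∀ v : V, 0 ≤ ∑ x, (if G.Adj v x then cG v x else 0) := by
    intro v
    apply Finset.sum_nonneg
    intro x _
    split
    · exact hnn v x
    · exact le_refl 0
  -- symmetry of cT on tree edges
  have hsetsym : ∀ u v : V, {x : ℝ | ∃ A : Finset V, u ∈ A ∧ v ∉ A ∧
        x = ∑ a ∈ A, ∑ b ∈ Aᶜ, if G.Adj a b then cG a b else 0} ⊆
      {x : ℝ | ∃ A : Finset V, v ∈ A ∧ u ∉ A ∧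
        x = ∑ a ∈ A, ∑ b ∈ Aᶜ, if G.Adj a b then cG a b else 0} := by
    rintro u v x ⟨A, hu, hv, rfl⟩
    refine ⟨Aᶜ, by simpa using hv, by simpa using hu, ?_⟩
    rw [compl_compl]
    refine Eq.trans ?_ Finset.sum_comm
    refine Finset.sum_congr rfl fun a _ => Finset.sum_congr rfl fun b _ => ?_
    by_cases hab : G.Adj a b
    · rw [if_pos hab, if_pos hab.symm, hsG]
    · rw [if_neg hab, if_neg fun h => hab h.symm]
  have hsymcT : ∀ u v, T.Adj u v → cT u v = cT v u := by
    intro u v huv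
    have h2 := hmin v u huv.symm
    have hSeq := Set.Subset.antisymm (hsetsym v u) (hsetsym u v)
    rw [hSeq] at h2
    exact ((hmin u v huv).unique h2)
  -- upper bound on cT across a tree edge
  have hle : ∀ u v, T.Adj u v → cT u v ≤ ∑ x, (if G.Adj v x then cG v x else 0) := by
    intro u v huv
    have hx : (∑ a ∈ ({v} : Finset V)ᶜ, ∑ b ∈ (({v} : Finset V)ᶜ)ᶜ,
        if G.Adj a b then cG a b else 0) ∈
        {x : ℝ | ∃ A : Finset V, u ∈ A ∧ v ∉ A ∧
          x = ∑ a ∈ A, ∑ b ∈ Aᶜ, if G.Adj a b then cG a b else 0} :=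
      ⟨({v} : Finset V)ᶜ, by simp [huv.ne], by simp, rfl⟩
    have hb := (hmin u v huv).2 hx
    refine le_trans hb (le_of_eq ?_)
    rw [compl_compl]
    have h1 : (∑ a ∈ ({v} : Finset V)ᶜ, ∑ b ∈ ({v} : Finset V),
        if G.Adj a b then cG a b else 0)
        = ∑ a ∈ ({v} : Finset V)ᶜ, (if G.Adj a v then cG a v else 0) := by
      refine Finset.sum_congr rfl fun a _ => ?_
      rw [Finset.sum_singleton]
    rw [h1]
    have h2 := Finset.sum_compl_add_sum ({v} : Finset V)
      (fun a => if G.Adj a v then cG a v else 0)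
    rw [Finset.sum_singleton, if_neg (G.irrefl), add_zero] at h2
    rw [h2]
    refine Finset.sum_congr rfl fun a _ => ?_
    by_cases hab : G.Adj a v
    · rw [if_pos hab, if_pos hab.symm, hsG]
    · rw [if_neg hab, if_neg fun h => hab h.symm]
  -- step 1 : LHS = sum over tree edges of cT
  have key : ∀ a b : V, (if G.Adj a b then cG a b * (T.dist a b : ℝ) else 0)
      = ∑ uv : V × V, (if T.Adj uv.1 uv.2 ∧ (G.Adj a b ∧ T.dist a uv.1 < T.dist a uv.2 ∧
          ¬ (T.dist b uv.1 < T.dist b uv.2)) then cG a b else 0) := by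
    intro a b
    by_cases hG : G.Adj a b
    · simp only [hG, true_and, if_true]
      rw [← Finset.sum_filter, Finset.sum_const, CutTreeAux.count_eq hT a b, nsmul_eq_mul,
        mul_comm]
    · simp [hG]
  have step1 : (∑ a, ∑ b, if G.Adj a b then cG a b * (T.dist a b : ℝ) else 0)
      = ∑ u, ∑ v, if T.Adj u v then cT u v else 0 := by
    calc (∑ a, ∑ b, if G.Adj a b then cG a b * (T.dist a b : ℝ) else 0)
        = ∑ ab : V × V, ∑ uv : V × V, (if T.Adj uv.1 uv.2 ∧ (G.Adj ab.1 ab.2 ∧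
            T.dist ab.1 uv.1 < T.dist ab.1 uv.2 ∧
            ¬ (T.dist ab.2 uv.1 < T.dist ab.2 uv.2)) then cG ab.1 ab.2 else 0) := by
          rw [Fintype.sum_prod_type]
          exact Finset.sum_congr rfl fun a _ => Finset.sum_congr rfl fun b _ => key a b
      _ = ∑ uv : V × V, ∑ ab : V × V, (if T.Adj uv.1 uv.2 ∧ (G.Adj ab.1 ab.2 ∧
            T.dist ab.1 uv.1 < T.dist ab.1 uv.2 ∧
            ¬ (T.dist ab.2 uv.1 < T.dist ab.2 uv.2)) then cG ab.1 ab.2 else 0) :=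
          Finset.sum_comm
      _ = ∑ u, ∑ v, if T.Adj u v then cT u v else 0 := by
          rw [Fintype.sum_prod_type]
          refine Finset.sum_congr rfl fun u _ => Finset.sum_congr rfl fun v _ => ?_
          by_cases h : T.Adj u v
          · simp only [h, true_and, if_true]
            rw [hcut u v h, Fintype.sum_prod_type]
          · simp [h]
  -- step 2 : orient edges away from the root r
  have step2 : (∑ u, ∑ v, if T.Adj u v then cT u v else 0)
      = 2 * ∑ u, ∑ v, if T.Adj u v ∧ T.dist r u < T.dist r v then cT u v else 0 := by
    have hsplit : ∀ u v : V, (if T.Adj u v then cT u v else 0)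
        = (if T.Adj u v ∧ T.dist r u < T.dist r v then cT u v else 0)
        + (if T.Adj u v ∧ T.dist r v < T.dist r u then cT u v else 0) := by
      intro u v
      by_cases h : T.Adj u v
      · have hne := CutTreeAux.dist_adj_ne hT h r
        rcases Nat.lt_or_ge (T.dist r u) (T.dist r v) with h' | h'
        · rw [if_pos h, if_pos ⟨h, h'⟩, if_neg (by rintro ⟨-, hlt⟩; omega), add_zero]
        · have h'' : T.dist r v < T.dist r u := by omega
          rw [if_pos h, if_neg (by rintro ⟨-, hlt⟩; omega), if_pos ⟨h, h''⟩, zero_add]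
      · simp [h]
    calc (∑ u, ∑ v, if T.Adj u v then cT u v else 0)
        = (∑ u, ∑ v, if T.Adj u v ∧ T.dist r u < T.dist r v then cT u v else 0)
        + (∑ u, ∑ v, if T.Adj u v ∧ T.dist r v < T.dist r u then cT u v else 0) := by
          rw [← Finset.sum_add_distrib]
          refine Finset.sum_congr rfl fun u _ => ?_
          rw [← Finset.sum_add_distrib]
          exact Finset.sum_congr rfl fun v _ => hsplit u v
      _ = 2 * ∑ u, ∑ v, (if T.Adj u v ∧ T.dist r u < T.dist r v then cT u v else 0) := by
          have hswap : (∑ u, ∑ v, if T.Adj u v ∧ T.dist r v < T.dist r u then cT u v else 0)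
              = ∑ u, ∑ v, (if T.Adj u v ∧ T.dist r u < T.dist r v then cT u v else 0) := by
            refine Finset.sum_comm.trans ?_
            refine Finset.sum_congr rfl fun u _ => Finset.sum_congr rfl fun v _ => ?_
            by_cases h : T.Adj u v
            · by_cases h' : T.dist r u < T.dist r v
              · rw [if_pos ⟨h.symm, h'⟩, if_pos ⟨h, h'⟩, hsymcT v u h.symm]
              · rw [if_neg (by rintro ⟨-, hlt⟩; omega), if_neg (by rintro ⟨-, hlt⟩; omega)]
            · rw [if_neg (by rintro ⟨hadj, -⟩; exact h hadj.symm),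
                if_neg (by rintro ⟨hadj, -⟩; exact h hadj)]
          rw [hswap, two_mul]
  -- step 3 : bound the oriented sum
  have step3 : (∑ u, ∑ v, if T.Adj u v ∧ T.dist r u < T.dist r v then cT u v else 0)
      ≤ ∑ a, ∑ b, (if G.Adj a b then cG a b else 0) := by
    refine Finset.sum_comm.trans_le ?_
    apply Finset.sum_le_sum
    intro v _
    by_cases hex : ∃ u, T.Adj u v ∧ T.dist r u < T.dist r v
    · obtain ⟨u₀, hu₀⟩ := hex
      rw [Finset.sum_eq_single u₀]
      · rw [if_pos hu₀]; exact hle u₀ v hu₀.1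
      · intro u _ hne
        rw [if_neg]
        rintro ⟨h1, h2⟩
        exact hne (CutTreeAux.parent_unique hT h1 hu₀.1 h2 hu₀.2)
      · intro h; exact absurd (Finset.mem_univ u₀) h
    · rw [Finset.sum_eq_zero]
      · exact hDnn v
      · intro u _
        rw [if_neg]
        intro hcond
        exact hex ⟨u, hcond⟩
  rw [step1, step2]
  have h2 : (0 : ℝ) ≤ 2 := by norm_num
  calc 2 * (∑ u, ∑ v, if T.Adj u v ∧ T.dist r u < T.dist r v then cT u v else 0)
      ≤ 2 * ∑ a, ∑ b, (if G.Adj a b then cG a b else 0) :=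
        mul_le_mul_of_nonneg_left step3 h2
    _ = 2 * ∑ a, ∑ b, (if G.Adj a b then cG a b else 0) := rfl
end

section
/- Let G be an undirected graph with three vertex layers A, B, C of n nodes each, all nodes in A and C having node-capacity 1 and all nodes in B having node-capacity 2n, with edges only between A and B and between B and C determined by boolean matrices P and Q (a∈A adjacent to b∈B iff P(a,b)=1; b∈B adjacent to c∈C iff Q(b,c)=1). Then for a∈A and c∈C: if the boolean matrix product entry R(a,c) = OR over b of (P(a,b) AND Q(b,c)) equals 1, then the node-capacitated maximum flow from a to c is at least 2n; and if R(a,c)=0, then this maximum flow is at most 2n-2. -/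
/-!
If some `b` has `P a b = Q b c = 1`, send `2n` units along `a – b – c`; only `b` is an
intermediate node, and its capacity is `2n`. Otherwise a path from `a` goes to some `b` and then
either back to `A`, at a node other than `a` (paths are simple), or on to `C`, at a node other
than `c` (as `Q b c = 0`). So every `a`-`c` path meets one of the `2n - 2` nodes of
`(A ∪ C) \ {a, c}`, each of capacity `1`, and this node cut bounds the flow.
-/

/-- The three-layer graph of the BMM reduction: layers `A`, `B`, `C` are the three
summands; `a ∈ A` is adjacent to `b ∈ B` iff `P a b = 1`, and `b ∈ B` is adjacent to
`c ∈ C` iff `Q b c = 1`. -/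
def bmmGraph (n : ℕ) (P Q : Fin n → Fin n → Bool) :
    SimpleGraph (Fin n ⊕ (Fin n ⊕ Fin n)) :=
  SimpleGraph.fromRel (fun x y =>
    match x, y with
    | Sum.inl a, Sum.inr (Sum.inl b) => P a b = true
    | Sum.inr (Sum.inl b), Sum.inr (Sum.inr c) => Q b c = true
    | _, _ => False)

/-- Node capacities: `1` on layers `A` and `C`, `2n` on the middle layer `B`. -/
def bmmCap (n : ℕ) : (Fin n ⊕ (Fin n ⊕ Fin n)) → ℕ
  | Sum.inl _ => 1
  | Sum.inr (Sum.inl _) => 2 * n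
  | Sum.inr (Sum.inr _) => 1

-- `List.count` on a sum type uses the derived `BEq` instance, which core does not prove lawful.
instance Sum.instLawfulBEq {α β : Type*} [BEq α] [BEq β] [LawfulBEq α] [LawfulBEq β] :
    LawfulBEq (α ⊕ β) where
  eq_of_beq {a b} h := by
    cases a <;> cases b <;> first | exact Bool.noConfusion h | exact congrArg _ (eq_of_beq h)
  rfl {a} := by cases a with | inl x | inr x => exact beq_self_eq_true x

open SimpleGraph

section UnitPathFlow

variable {V : Type*} [BEq V] {s t : V}

def IsUnitPathFlow (G : SimpleGraph V) (cap : V → ℕ) (L : List (G.Walk s t)) : Prop :=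
  (∀ p ∈ L, p.IsPath) ∧
    ∀ v, v ≠ s → v ≠ t → (L.map (fun p => p.support.count v)).sum ≤ cap v

variable {G : SimpleGraph V}

lemma List.length_le_sum_sum_map_of_forall_exists {α ι : Type*} (S : Finset ι) (f : α → ι → ℕ)
    (L : List α) (h : ∀ p ∈ L, ∃ v ∈ S, 0 < f p v) :
    L.length ≤ ∑ v ∈ S, (L.map (f · v)).sum := by
  calc L.length = (L.map fun _ => 1).sum := by simp
    _ ≤ (L.map fun p => ∑ v ∈ S, f p v).sum := List.sum_le_sum fun p hp => by
        obtain ⟨v, hv, hpos⟩ := h p hp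
        exact hpos.trans_le (Finset.single_le_sum (fun _ _ => Nat.zero_le _) hv)
    _ = ∑ v ∈ S, (L.map (f · v)).sum := by
        simpa using Multiset.sum_map_sum (m := (L : Multiset α)) (s := S) (f := f)

lemma IsUnitPathFlow.length_le_sum_cap [LawfulBEq V] {cap : V → ℕ} {L : List (G.Walk s t)}
    (hL : IsUnitPathFlow G cap L) {S : Finset V} (hS : ∀ v ∈ S, v ≠ s ∧ v ≠ t)
    (hmeet : ∀ p ∈ L, ∃ v ∈ S, v ∈ p.support) :
    L.length ≤ ∑ v ∈ S, cap v :=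
  calc L.length ≤ ∑ v ∈ S, (L.map (fun p => p.support.count v)).sum :=
        List.length_le_sum_sum_map_of_forall_exists S _ L fun p hp => by
          obtain ⟨v, hv, hmem⟩ := hmeet p hp
          exact ⟨v, hv, List.count_pos_iff.mpr hmem⟩
    _ ≤ ∑ v ∈ S, cap v := Finset.sum_le_sum fun v hv => hL.2 v (hS v hv).1 (hS v hv).2

lemma isUnitPathFlow_replicate [LawfulBEq V] {cap : V → ℕ} {p : G.Walk s t} (hp : p.IsPath)
    {k : ℕ} (hk : ∀ v ∈ p.support, v ≠ s → v ≠ t → k ≤ cap v) :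
    IsUnitPathFlow G cap (List.replicate k p) := by
  refine ⟨fun q hq => List.eq_of_mem_replicate hq ▸ hp, fun v hvs hvt => ?_⟩
  simp only [List.map_replicate, List.sum_replicate, smul_eq_mul]
  by_cases hv : v ∈ p.support
  · have hcount : p.support.count v ≤ 1 := List.nodup_iff_count_le_one.mp hp.support_nodup v
    calc k * p.support.count v ≤ k := mul_le_of_le_one_right' hcount
      _ ≤ cap v := hk v hv hvs hvt
  · simp [List.count_eq_zero_of_not_mem hv]

end UnitPathFlow

section BmmGraph

open Finset

variable {n : ℕ} {P Q : Fin n → Fin n → Bool}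

@[simp] lemma bmmGraph_adj_inl_inr_inl {a b : Fin n} :
    (bmmGraph n P Q).Adj (Sum.inl a) (Sum.inr (Sum.inl b)) ↔ P a b = true := by
  simp [bmmGraph]

@[simp] lemma bmmGraph_adj_inr_inl_inr_inr {b c : Fin n} :
    (bmmGraph n P Q).Adj (Sum.inr (Sum.inl b)) (Sum.inr (Sum.inr c)) ↔ Q b c = true := by
  simp [bmmGraph]

@[simp] lemma not_bmmGraph_adj_inl_inl {a a' : Fin n} :
    ¬ (bmmGraph n P Q).Adj (Sum.inl a) (Sum.inl a') := by
  simp [bmmGraph]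

@[simp] lemma not_bmmGraph_adj_inl_inr_inr {a c : Fin n} :
    ¬ (bmmGraph n P Q).Adj (Sum.inl a) (Sum.inr (Sum.inr c)) := by
  simp [bmmGraph]

@[simp] lemma not_bmmGraph_adj_inr_inl_inr_inl {b b' : Fin n} :
    ¬ (bmmGraph n P Q).Adj (Sum.inr (Sum.inl b)) (Sum.inr (Sum.inl b')) := by
  simp [bmmGraph]

def bmmOuterCut (a c : Fin n) : Finset (Fin n ⊕ (Fin n ⊕ Fin n)) :=
  (univ.erase a).disjSum ((∅ : Finset (Fin n)).disjSum (univ.erase c))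

lemma card_bmmOuterCut (a c : Fin n) : #(bmmOuterCut a c) = 2 * n - 2 := by
  simp only [bmmOuterCut, card_disjSum, card_empty, card_erase_of_mem (mem_univ _), card_univ,
    Fintype.card_fin]
  omega

lemma bmmCap_of_mem_bmmOuterCut {a c : Fin n} {v : Fin n ⊕ (Fin n ⊕ Fin n)}
    (hv : v ∈ bmmOuterCut a c) : bmmCap n v = 1 := by
  rcases v with _ | _ | _ <;> simp_all [bmmOuterCut, bmmCap]

lemma ne_of_mem_bmmOuterCut {a c : Fin n} {v : Fin n ⊕ (Fin n ⊕ Fin n)}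
    (hv : v ∈ bmmOuterCut a c) : v ≠ Sum.inl a ∧ v ≠ Sum.inr (Sum.inr c) := by
  rcases v with _ | _ | _ <;> simp_all [bmmOuterCut]

lemma exists_mem_bmmOuterCut_support {a c : Fin n}
    (hR : ∀ b, ¬ (P a b = true ∧ Q b c = true))
    {p : (bmmGraph n P Q).Walk (Sum.inl a) (Sum.inr (Sum.inr c))} (hp : p.IsPath) :
    ∃ v ∈ bmmOuterCut a c, v ∈ p.support := by
  obtain _ | @⟨_, v₁, _, hab, q⟩ := p
  rcases v₁ with _ | b | _
  · simp at hab
  · obtain _ | @⟨_, v₂, _, hbv, _⟩ := q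
    rcases v₂ with a' | _ | c'
    · have ha' : a' ≠ a := by
        rintro rfl
        simpa using hp.support_nodup
      exact ⟨Sum.inl a', by simpa [bmmOuterCut] using ha', by simp⟩
    · simp at hbv
    · have hc' : c' ≠ c := by
        rintro rfl
        exact hR b ⟨by simpa using hab, by simpa using hbv⟩
      exact ⟨Sum.inr (Sum.inr c'), by simpa [bmmOuterCut] using hc', by simp⟩
  · simp at hab

lemma exists_isUnitPathFlow_bmmGraph {a b c : Fin n} (hP : P a b = true) (hQ : Q b c = true) :
    ∃ L : List ((bmmGraph n P Q).Walk (Sum.inl a) (Sum.inr (Sum.inr c))),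
      IsUnitPathFlow (bmmGraph n P Q) (bmmCap n) L ∧ 2 * n ≤ L.length := by
  let p : (bmmGraph n P Q).Walk (Sum.inl a) (Sum.inr (Sum.inr c)) :=
    .cons (bmmGraph_adj_inl_inr_inl.mpr hP) (.cons (bmmGraph_adj_inr_inl_inr_inr.mpr hQ) .nil)
  have hp : p.IsPath := by simp [p, Walk.isPath_def]
  refine ⟨List.replicate (2 * n) p, isUnitPathFlow_replicate hp fun v hv hva hvc => ?_, by simp⟩
  have hvb : v = Sum.inr (Sum.inl b) := by simp_all [p]
  simp [hvb, bmmCap]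

lemma IsUnitPathFlow.length_le_of_bmmGraph {a c : Fin n}
    (hR : ∀ b, ¬ (P a b = true ∧ Q b c = true))
    {L : List ((bmmGraph n P Q).Walk (Sum.inl a) (Sum.inr (Sum.inr c)))}
    (hL : IsUnitPathFlow (bmmGraph n P Q) (bmmCap n) L) :
    L.length ≤ 2 * n - 2 :=
  calc L.length ≤ ∑ v ∈ bmmOuterCut a c, bmmCap n v :=
        hL.length_le_sum_cap (fun _ hv => ne_of_mem_bmmOuterCut hv)
          fun p hp => exists_mem_bmmOuterCut_support hR (hL.1 p hp)
    _ = 2 * n - 2 := by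
        rw [sum_congr rfl fun _ hv => bmmCap_of_mem_bmmOuterCut hv, sum_const, smul_eq_mul,
          mul_one, card_bmmOuterCut]

end BmmGraph

theorem stmt_10_general (n : ℕ) (P Q : Fin n → Fin n → Bool) (a c : Fin n) :
    ((∃ b, P a b = true ∧ Q b c = true) →
      ∃ L : List ((bmmGraph n P Q).Walk (Sum.inl a) (Sum.inr (Sum.inr c))),
        (∀ p ∈ L, p.IsPath) ∧
        (∀ v, v ≠ Sum.inl a → v ≠ Sum.inr (Sum.inr c) →
          (L.map (fun p => p.support.count v)).sum ≤ bmmCap n v) ∧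
        2 * n ≤ L.length) ∧
    ((∀ b, ¬ (P a b = true ∧ Q b c = true)) →
      ∀ L : List ((bmmGraph n P Q).Walk (Sum.inl a) (Sum.inr (Sum.inr c))),
        (∀ p ∈ L, p.IsPath) →
        (∀ v, v ≠ Sum.inl a → v ≠ Sum.inr (Sum.inr c) →
          (L.map (fun p => p.support.count v)).sum ≤ bmmCap n v) →
        L.length ≤ 2 * n - 2) := by
  refine ⟨fun ⟨b, hP, hQ⟩ => ?_, fun hR L hpath hcap => ?_⟩
  · obtain ⟨L, ⟨hpath, hcap⟩, hlen⟩ := exists_isUnitPathFlow_bmmGraph hP hQ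
    exact ⟨L, hpath, hcap, hlen⟩
  · exact IsUnitPathFlow.length_le_of_bmmGraph hR ⟨hpath, hcap⟩

/-- In the node-capacitated three-layer graph of the BMM reduction, for
`a ∈ A` and `c ∈ C`: if `R(a,c) = ⋁_b (P(a,b) ∧ Q(b,c)) = 1` then the maximum
node-capacitated `a`-`c` flow is at least `2n`; if `R(a,c) = 0` it is at most `2n-2`.
A flow is modeled as a list of unit-flow simple paths such that the total flow through
each intermediate node is at most its capacity (source/sink capacities not enforced). -/
theorem stmt_10 (n : ℕ) (hn : 0 < n) (P Q : Fin n → Fin n → Bool) (a c : Fin n) :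
    ((∃ b, P a b = true ∧ Q b c = true) →
      ∃ L : List ((bmmGraph n P Q).Walk (Sum.inl a) (Sum.inr (Sum.inr c))),
        (∀ p ∈ L, p.IsPath) ∧
        (∀ v, v ≠ Sum.inl a → v ≠ Sum.inr (Sum.inr c) →
          (L.map (fun p => p.support.count v)).sum ≤ bmmCap n v) ∧
        2 * n ≤ L.length) ∧
    ((∀ b, ¬ (P a b = true ∧ Q b c = true)) →
      ∀ L : List ((bmmGraph n P Q).Walk (Sum.inl a) (Sum.inr (Sum.inr c))),
        (∀ p ∈ L, p.IsPath) →
        (∀ v, v ≠ Sum.inl a → v ≠ Sum.inr (Sum.inr c) →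
          (L.map (fun p => p.support.count v)).sum ≤ bmmCap n v) →
        L.length ≤ 2 * n - 2) :=
  stmt_10_general n P Q a c
end

section
/- Let G be an undirected graph with node capacities, let f be a flow from s to t decomposed into unit-flow paths, and suppose every s-t path in G either passes through a designated set S of nodes of capacity 1 (with s,t ∉ S) or uses only edges consistent with an orientation D of G. Then the value of f is at most |S| plus the maximum st-flow value of the directed node-capacitated graph D. -/
/-!
Split the unit-flow paths into those meeting `S` and those avoiding it. A path meeting `S`
uses at least one unit of the total capacity `|S|` of the nodes of `S`, so there are at most
`|S|` of them. Every path avoiding `S` follows `D`, so these paths form a feasible flow of the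
directed graph `D` and there are at most `M` of them.
-/

namespace List

variable {ι : Type*}

theorem sum_map_filter_le (l : List ι) (q : ι → Bool) (f : ι → ℕ) :
    ((l.filter q).map f).sum ≤ (l.map f).sum :=
  (l.filter_sublist.map f).sum_le_sum fun _ _ => Nat.zero_le _

theorem length_le_card_of_unit_capacity {α : Type*} {l : List ι} {S : Finset α}
    {c : α → ι → ℕ} (hhit : ∀ i ∈ l, ∃ a ∈ S, 1 ≤ c a i)
    (hcap : ∀ a ∈ S, (l.map (c a)).sum ≤ 1) : l.length ≤ S.card :=
  calc l.length ≤ (l.map fun i => ∑ a ∈ S, c a i).sum := by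
        simpa using length_le_sum_of_one_le (l.map fun i => ∑ a ∈ S, c a i) <| by
          simp only [mem_map, forall_exists_index, and_imp, forall_apply_eq_imp_iff₂]
          intro i hi
          obtain ⟨a, ha, hca⟩ := hhit i hi
          exact hca.trans <|
            Finset.single_le_sum (f := fun a => c a i) (fun _ _ => Nat.zero_le _) ha
    _ = ∑ a ∈ S, (l.map (c a)).sum := by
        simpa using Multiset.sum_map_sum (m := (l : Multiset ι)) (s := S) (f := fun i a => c a i)
    _ ≤ ∑ _a ∈ S, 1 := Finset.sum_le_sum hcap
    _ = S.card := by simp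

end List

theorem SimpleGraph.length_filter_meets_le_card {V : Type*} [DecidableEq V] {G : SimpleGraph V}
    {s t : V} (L : List (G.Walk s t)) {S : Finset V} {cap : V → ℕ}
    (hs : s ∉ S) (ht : t ∉ S) (hcapS : ∀ v ∈ S, cap v = 1)
    (hfeas : ∀ v, v ≠ s → v ≠ t → (L.map (fun p => p.support.count v)).sum ≤ cap v) :
    (L.filter fun p => ∃ x ∈ p.support, x ∈ S).length ≤ S.card := by
  refine List.length_le_card_of_unit_capacity (c := fun v p => p.support.count v) ?_ ?_
  · intro p hp
    obtain ⟨x, hx, hxS⟩ := of_decide_eq_true (List.of_mem_filter hp :)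
    exact ⟨x, hxS, List.one_le_count_iff.mpr hx⟩
  · intro v hv
    calc _ ≤ (L.map (fun p => p.support.count v)).sum := List.sum_map_filter_le _ _ _
      _ ≤ cap v := hfeas v (by rintro rfl; exact hs hv) (by rintro rfl; exact ht hv)
      _ = 1 := hcapS v hv

theorem stmt_13_general {V : Type*} [DecidableEq V] (G : SimpleGraph V)
    (cap : V → ℕ) (s t : V)
    (S : Finset V) (hs : s ∉ S) (ht : t ∉ S) (hcapS : ∀ v ∈ S, cap v = 1)
    (D : V → V → Prop)
    (L : List (G.Walk s t)) (hpath : ∀ p ∈ L, p.IsPath)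
    (hfeas : ∀ v, v ≠ s → v ≠ t →
      (L.map (fun p => p.support.count v)).sum ≤ cap v)
    (hsplit : ∀ p ∈ L, (∃ x ∈ p.support, x ∈ S) ∨ (∀ d ∈ p.darts, D d.fst d.snd))
    (M : ℕ)
    (hM : ∀ L' : List (G.Walk s t), (∀ p ∈ L', p.IsPath) →
      (∀ p ∈ L', ∀ d ∈ p.darts, D d.fst d.snd) →
      (∀ v, v ≠ s → v ≠ t →
        (L'.map (fun p => p.support.count v)).sum ≤ cap v) →
      L'.length ≤ M) :
    L.length ≤ S.card + M := by
  let meetsS : G.Walk s t → Bool := fun p => ∃ x ∈ p.support, x ∈ S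
  have hthrough : (L.filter meetsS).length ≤ S.card :=
    G.length_filter_meets_le_card L hs ht hcapS hfeas
  have havoiding : (L.filter (!meetsS ·)).length ≤ M := by
    refine hM _ (fun p hp => hpath p (List.mem_of_mem_filter hp)) ?_ fun v hvs hvt =>
      (List.sum_map_filter_le _ _ _).trans (hfeas v hvs hvt)
    intro p hp
    have hp' : ¬∃ x ∈ p.support, x ∈ S := by simpa [meetsS] using List.of_mem_filter hp
    exact (hsplit p (List.mem_of_mem_filter hp)).resolve_left hp'
  rw [L.length_eq_length_filter_add meetsS]
  omega

/-- Let `G` be an undirected node-capacitated graph, `f` an `s`-`t` flow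
decomposed into unit-flow simple paths (a list `L` of paths feasible w.r.t. the node
capacities at intermediate nodes), `S` a set of capacity-1 nodes with `s, t ∉ S`, and
`D` an orientation of (part of) `G`.  If every path of `f` either passes through `S`
or uses only edges consistent with `D`, then the value of `f` is at most `|S|` plus
any upper bound `M` on the value of node-capacitated `s`-`t` flows of the directed
graph `D` — in particular at most `|S|` plus the maximum `st`-flow value of `D`. -/
theorem stmt_13 {V : Type*} [Fintype V] [DecidableEq V] (G : SimpleGraph V)
    (cap : V → ℕ) (s t : V) (hst : s ≠ t)
    (S : Finset V) (hs : s ∉ S) (ht : t ∉ S) (hcapS : ∀ v ∈ S, cap v = 1)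
    (D : V → V → Prop) (hD : ∀ a b, D a b → G.Adj a b)
    (L : List (G.Walk s t)) (hpath : ∀ p ∈ L, p.IsPath)
    (hfeas : ∀ v, v ≠ s → v ≠ t →
      (L.map (fun p => p.support.count v)).sum ≤ cap v)
    (hsplit : ∀ p ∈ L, (∃ x ∈ p.support, x ∈ S) ∨ (∀ d ∈ p.darts, D d.fst d.snd))
    (M : ℕ)
    (hM : ∀ L' : List (G.Walk s t), (∀ p ∈ L', p.IsPath) →
      (∀ p ∈ L', ∀ d ∈ p.darts, D d.fst d.snd) →
      (∀ v, v ≠ s → v ≠ t →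
        (L'.map (fun p => p.support.count v)).sum ≤ cap v) →
      L'.length ≤ M) :
    L.length ≤ S.card + M :=
  stmt_13_general G cap s t S hs ht hcapS D L hpath hfeas hsplit M hM
end

section
/- Let G be an undirected graph with edge capacities, and let s, t, u be nodes such that there exists a minimum st-cut (S, V\S) with s,u ∈ S and t ∉ S. Then there exists a minimum su-cut (if u ≠ s) entirely contained on one side: specifically, the minimum su-cut value in the graph G' obtained from G by contracting V\S into a single node equals the minimum su-cut value in G. -/
open Finset

section Aux

variable {V : Type*} [Fintype V] [DecidableEq V]

private def cutE (f : V → V → ℝ) (P Q : Finset V) : ℝ := ∑ a ∈ P, ∑ b ∈ Q, f a b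

private lemma cutE_union_left (f : V → V → ℝ) {P Q : Finset V} (R : Finset V)
    (h : Disjoint P Q) : cutE f (P ∪ Q) R = cutE f P R + cutE f Q R :=
  Finset.sum_union h

private lemma cutE_union_right (f : V → V → ℝ) (P : Finset V) {Q R : Finset V}
    (h : Disjoint Q R) : cutE f P (Q ∪ R) = cutE f P Q + cutE f P R := by
  unfold cutE
  rw [← Finset.sum_add_distrib]
  exact Finset.sum_congr rfl fun a _ => Finset.sum_union h

private lemma cutE_symm {f : V → V → ℝ} (hs : ∀ a b, f a b = f b a) (P Q : Finset V) :
    cutE f P Q = cutE f Q P := by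
  unfold cutE
  rw [Finset.sum_comm]
  exact Finset.sum_congr rfl fun a _ => Finset.sum_congr rfl fun b _ => hs _ _

private lemma cutE_nonneg {f : V → V → ℝ} (hnn : ∀ a b, 0 ≤ f a b) (P Q : Finset V) :
    0 ≤ cutE f P Q :=
  Finset.sum_nonneg fun a _ => Finset.sum_nonneg fun b _ => hnn a b

/-- The cut value of a set. -/
private def cutv (f : V → V → ℝ) (A : Finset V) : ℝ := cutE f A Aᶜ

private lemma cutv_compl {f : V → V → ℝ} (hs : ∀ a b, f a b = f b a) (A : Finset V) :
    cutv f Aᶜ = cutv f A := by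
  unfold cutv
  rw [compl_compl]
  exact cutE_symm hs _ _

private lemma cut_submod {f : V → V → ℝ} (hnn : ∀ a b, 0 ≤ f a b)
    (hs : ∀ a b, f a b = f b a) (A B : Finset V) :
    cutv f (A ∩ B) + cutv f (A ∪ B) ≤ cutv f A + cutv f B := by
  set P1 := A ∩ B with hP1
  set P2 := A \ B with hP2
  set P3 := B \ A with hP3
  set P4 := (A ∪ B)ᶜ with hP4
  have hA : A = P1 ∪ P2 := by ext x; simp [hP1, hP2]; tauto
  have hAc : Aᶜ = P3 ∪ P4 := by ext x; simp [hP3, hP4]; tauto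
  have hB : B = P1 ∪ P3 := by ext x; simp [hP1, hP3]; tauto
  have hBc : Bᶜ = P2 ∪ P4 := by ext x; simp [hP2, hP4]; tauto
  have hIc : (A ∩ B)ᶜ = P2 ∪ (P3 ∪ P4) := by ext x; simp [hP2, hP3, hP4]; tauto
  have hU : A ∪ B = P1 ∪ (P2 ∪ P3) := by ext x; simp [hP1, hP2, hP3]; tauto
  have d12 : Disjoint P1 P2 := by
    rw [Finset.disjoint_left]; intro x hx hx'; simp [hP1, hP2] at hx hx'; tauto
  have d13 : Disjoint P1 P3 := by
    rw [Finset.disjoint_left]; intro x hx hx'; simp [hP1, hP3] at hx hx'; tauto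
  have d23 : Disjoint P2 P3 := by
    rw [Finset.disjoint_left]; intro x hx hx'; simp [hP2, hP3] at hx hx'; tauto
  have d24 : Disjoint P2 P4 := by
    rw [Finset.disjoint_left]; intro x hx hx'; simp [hP2, hP4] at hx hx'; tauto
  have d34 : Disjoint P3 P4 := by
    rw [Finset.disjoint_left]; intro x hx hx'; simp [hP3, hP4] at hx hx'; tauto
  have d1_23 : Disjoint P1 (P2 ∪ P3) := by
    rw [Finset.disjoint_union_right]; exact ⟨d12, d13⟩
  have d2_34 : Disjoint P2 (P3 ∪ P4) := by
    rw [Finset.disjoint_union_right]; exact ⟨d23, d24⟩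
  have hcutA : cutv f A = cutE f P1 P3 + cutE f P1 P4 + (cutE f P2 P3 + cutE f P2 P4) := by
    unfold cutv
    rw [hAc, hA, cutE_union_left f _ d12, cutE_union_right f _ d34, cutE_union_right f _ d34]
  have hcutB : cutv f B = cutE f P1 P2 + cutE f P1 P4 + (cutE f P3 P2 + cutE f P3 P4) := by
    unfold cutv
    rw [hBc, hB, cutE_union_left f _ d13, cutE_union_right f _ d24, cutE_union_right f _ d24]
  have hcutI : cutv f (A ∩ B) = cutE f P1 P2 + (cutE f P1 P3 + cutE f P1 P4) := by
    unfold cutv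
    rw [hIc, ← hP1, cutE_union_right f _ d2_34, cutE_union_right f _ d34]
  have hcutU : cutv f (A ∪ B) = cutE f P1 P4 + (cutE f P2 P4 + cutE f P3 P4) := by
    unfold cutv
    have h4 : (A ∪ B)ᶜ = P4 := rfl
    rw [h4, hU, cutE_union_left f _ d1_23, cutE_union_left f _ d23]
  have h23 : cutE f P3 P2 = cutE f P2 P3 := cutE_symm hs _ _
  have h23nn : 0 ≤ cutE f P2 P3 := cutE_nonneg hnn _ _
  linarith [hcutA, hcutB, hcutI, hcutU]

end Aux

/-- (Uncrossing/submodularity lemma behind Gomory–Hu.)  Suppose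
`(S, V∖S)` is a minimum `st`-cut with `s, u ∈ S`, `t ∉ S`, and `u ≠ s`.  Contracting
`V∖S` into a single node does not change the minimum `su`-cut value: the minimum over
`su`-cuts keeping `V∖S` on one side (these are exactly the cuts of the contracted
graph `G'`) equals the minimum over all `su`-cuts of `G`. -/
theorem stmt_15 {V : Type*} [Fintype V] [DecidableEq V] (G : SimpleGraph V)
    [DecidableRel G.Adj] (cG : V → V → ℝ)
    (hnn : ∀ a b, 0 ≤ cG a b) (hsG : ∀ a b, cG a b = cG b a)
    (s t u : V) (hus : u ≠ s)
    (S : Finset V) (hsS : s ∈ S) (huS : u ∈ S) (htS : t ∉ S)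
    (hmin : ∀ A : Finset V, s ∈ A → t ∉ A →
      (∑ a ∈ S, ∑ b ∈ Sᶜ, if G.Adj a b then cG a b else 0)
        ≤ ∑ a ∈ A, ∑ b ∈ Aᶜ, if G.Adj a b then cG a b else 0) :
    sInf {x : ℝ | ∃ A : Finset V, u ∈ A ∧ s ∉ A ∧ (A ⊆ S ∨ Sᶜ ⊆ A) ∧
        x = ∑ a ∈ A, ∑ b ∈ Aᶜ, if G.Adj a b then cG a b else 0}
      = sInf {x : ℝ | ∃ A : Finset V, u ∈ A ∧ s ∉ A ∧
        x = ∑ a ∈ A, ∑ b ∈ Aᶜ, if G.Adj a b then cG a b else 0} := by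
  set f : V → V → ℝ := fun a b => if G.Adj a b then cG a b else 0 with hf
  have hfnn : ∀ a b, 0 ≤ f a b := by
    intro a b; simp only [hf]; split
    · exact hnn a b
    · exact le_refl 0
  have hfs : ∀ a b, f a b = f b a := by
    intro a b; simp only [hf, G.adj_comm a b, hsG a b]
  have hcv : ∀ A : Finset V,
      (∑ a ∈ A, ∑ b ∈ Aᶜ, if G.Adj a b then cG a b else 0) = cutv f A := fun A => rfl
  set T1 : Set ℝ := {x : ℝ | ∃ A : Finset V, u ∈ A ∧ s ∉ A ∧ (A ⊆ S ∨ Sᶜ ⊆ A) ∧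
      x = ∑ a ∈ A, ∑ b ∈ Aᶜ, if G.Adj a b then cG a b else 0} with hT1
  set T2 : Set ℝ := {x : ℝ | ∃ A : Finset V, u ∈ A ∧ s ∉ A ∧
      x = ∑ a ∈ A, ∑ b ∈ Aᶜ, if G.Adj a b then cG a b else 0} with hT2
  have hsub : T1 ⊆ T2 := by
    rintro x ⟨A, h1, h2, _, h4⟩; exact ⟨A, h1, h2, h4⟩
  have hrange : T2 ⊆ Set.range (cutv f) := by
    rintro x ⟨A, _, _, h4⟩; exact ⟨A, (h4.trans (hcv A)).symm⟩
  have hbdd2 : BddBelow T2 := (Set.finite_range (cutv f)).bddBelow.mono hrange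
  have hbdd1 : BddBelow T1 := hbdd2.mono hsub
  have hne1 : T1.Nonempty := by
    refine ⟨cutv f {u}, {u}, Finset.mem_singleton_self u, ?_, ?_, (hcv {u}).symm⟩
    · simp [hus.symm]
    · left; simpa using huS
  have hne2 : T2.Nonempty := hne1.mono hsub
  apply le_antisymm
  · -- sInf T1 ≤ sInf T2 : uncross any cut in T2
    apply le_csInf hne2
    rintro x ⟨A, huA, hsA, hx⟩
    rw [hcv A] at hx
    by_cases htA : t ∈ A
    · -- use A ∪ Sᶜ
      have hkey : cutv f (A ∪ Sᶜ) ≤ cutv f A := by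
        have hsm := cut_submod hfnn hfs A Sᶜ
        have hSc : cutv f Sᶜ = cutv f S := cutv_compl hfs S
        have h1 : cutv f S ≤ cutv f ((A ∩ Sᶜ)ᶜ) := by
          have hs' : s ∈ (A ∩ Sᶜ)ᶜ := by simp [hsA]
          have ht' : t ∉ (A ∩ Sᶜ)ᶜ := by simp [htA, htS]
          have := hmin ((A ∩ Sᶜ)ᶜ) hs' ht'
          rwa [hcv, hcv] at this
        rw [cutv_compl hfs] at h1
        linarith
      have hmem : cutv f (A ∪ Sᶜ) ∈ T1 :=
        ⟨A ∪ Sᶜ, Finset.mem_union_left _ huA, by simp [hsA, hsS],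
          Or.inr Finset.subset_union_right, (hcv _).symm⟩
      calc sInf T1 ≤ cutv f (A ∪ Sᶜ) := csInf_le hbdd1 hmem
        _ ≤ cutv f A := hkey
        _ = x := hx.symm
    · -- use A ∩ S
      have hkey : cutv f (A ∩ S) ≤ cutv f A := by
        have hsm := cut_submod hfnn hfs A S
        have h1 : cutv f S ≤ cutv f (A ∪ S) := by
          have hs' : s ∈ A ∪ S := Finset.mem_union_right _ hsS
          have ht' : t ∉ A ∪ S := by simp [htA, htS]
          have := hmin (A ∪ S) hs' ht'
          rwa [hcv, hcv] at this
        linarith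
      have hmem : cutv f (A ∩ S) ∈ T1 :=
        ⟨A ∩ S, Finset.mem_inter.mpr ⟨huA, huS⟩, fun h => hsA (Finset.mem_inter.mp h).1,
          Or.inl Finset.inter_subset_right, (hcv _).symm⟩
      calc sInf T1 ≤ cutv f (A ∩ S) := csInf_le hbdd1 hmem
        _ ≤ cutv f A := hkey
        _ = x := hx.symm
  · exact csInf_le_csInf hbdd2 hne1 hsub
end
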